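/- arXiv:2209.05988 — 2 statements merged into one kernel-verified Lean document; each statement's English description precedes it below -/
import Mathlib

section
/- Let γ: ℝ/L → ℝ³ be a minimal inspection curve. Then the set {t ∈ ℝ/L : γ(t) = o} of times at which γ passes through the origin is finite. -/
/-! If a minimal inspection curve passed through the origin infinitely often, two of these visits
would be less than one unit of time apart. The arc between them stays within distance `< 1` of
the origin, i.e. strictly inside the unit ball, and such points are never needed to cover the
sphere: a point of the sphere outside the convex hull of the rest of the curve is separated from
it by a half-space, and the unit normal of that half-space cannot be reached by convex
combinations of points of norm `< 1` either. Cutting the arc out therefore yields a strictly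
shorter inspection curve. -/

open Real Set MeasureTheory ENNReal

noncomputable section


noncomputable section

abbrev E3 := EuclideanSpace ℝ (Fin 3)

/-- The lift of a curve `γ : ℝ/L → ℝ³` to `ℝ`, via the quotient map `ℝ → ℝ/L`. -/
def liftCurve (L : ℝ) (γ : AddCircle L → E3) : ℝ → E3 := fun s => γ s

/-- An inspection curve is a closed rectifiable curve `γ : ℝ/L → ℝ³`, parameterized with
constant unit speed (`1`-Lipschitz with total variation `L` over one period), whose convex
hull contains the unit sphere centered at the origin. -/
def IsInspectionCurve (L : ℝ) (γ : AddCircle L → E3) : Prop :=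
  0 < L ∧ Continuous γ ∧ LipschitzWith 1 (liftCurve L γ) ∧
    eVariationOn (liftCurve L γ) (Set.Icc 0 L) = ENNReal.ofReal L ∧
    Metric.sphere (0 : E3) 1 ⊆ convexHull ℝ (Set.range γ)

/-- A minimal inspection curve is an inspection curve of minimal length. -/
def IsMinInspectionCurve (L : ℝ) (γ : AddCircle L → E3) : Prop :=
  IsInspectionCurve L γ ∧
    ∀ (L' : ℝ) (γ' : AddCircle L' → E3), IsInspectionCurve L' γ' → L ≤ L'

theorem LipschitzOnWith.lipschitzWith_comp_toIcoMod {α : Type*} [PseudoMetricSpace α]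
    {K : NNReal} {p a : ℝ} (hp : 0 < p) {F : ℝ → α} (hF : LipschitzOnWith K F (Icc a (a + p)))
    (hFa : F a = F (a + p)) : LipschitzWith K fun s => F (toIcoMod hp a s) := by
  refine LipschitzWith.of_dist_le_mul fun x y => ?_
  set x' := toIcoMod hp a x
  set y' := toIcoMod hp a y
  have hx' : x' ∈ Icc a (a + p) := Ico_subset_Icc_self (toIcoMod_mem_Ico hp a x)
  have hy' : y' ∈ Icc a (a + p) := Ico_subset_Icc_self (toIcoMod_mem_Ico hp a y)
  have hx := toIcoMod_add_toIcoDiv_mul hp a x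
  have hy := toIcoMod_add_toIcoDiv_mul hp a y
  have hdist : dist x y = |x - y| := Real.dist_eq x y
  have direct : dist (F x') (F y') ≤ K * |x' - y'| := hF.dist_le_mul x' hx' y' hy'
  -- going around the circle through `a ≡ a + p`
  have around : ∀ u ∈ Icc a (a + p), ∀ v ∈ Icc a (a + p),
      dist (F u) (F v) ≤ K * ((a + p - u) + (v - a)) := by
    intro u hu v hv
    calc dist (F u) (F v) ≤ dist (F u) (F (a + p)) + dist (F a) (F v) := by
          rw [← hFa]; exact dist_triangle _ _ _
      _ ≤ K * |u - (a + p)| + K * |a - v| :=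
          add_le_add (hF.dist_le_mul u hu _ (right_mem_Icc.2 (by linarith)))
            (hF.dist_le_mul a (left_mem_Icc.2 (by linarith)) v hv)
      _ = K * ((a + p - u) + (v - a)) := by
          rw [abs_of_nonpos (by linarith [hu.2]), abs_of_nonpos (by linarith [hv.1])]; ring
  rcases lt_trichotomy (toIcoDiv hp a x) (toIcoDiv hp a y) with hlt | heq | hgt
  · have h1 : (toIcoDiv hp a x : ℝ) + 1 ≤ toIcoDiv hp a y := by exact_mod_cast hlt
    refine (around x' hx' y' hy').trans (mul_le_mul_of_nonneg_left ?_ K.coe_nonneg)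
    rw [hdist, abs_sub_comm]
    refine le_trans ?_ (le_abs_self _)
    nlinarith
  · rw [hdist, ← hx, ← hy, heq, add_sub_add_right_eq_sub]
    exact direct
  · have h1 : (toIcoDiv hp a y : ℝ) + 1 ≤ toIcoDiv hp a x := by exact_mod_cast hgt
    rw [dist_comm (F x')]
    refine (around y' hy' x' hx').trans (mul_le_mul_of_nonneg_left ?_ K.coe_nonneg)
    rw [hdist]
    refine le_trans ?_ (le_abs_self _)
    nlinarith

theorem eVariationOn_Icc_add_Icc {α : Type*} [PseudoEMetricSpace α] (f : ℝ → α) {x y z : ℝ}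
    (hxy : x ≤ y) (hyz : y ≤ z) :
    eVariationOn f (Icc x y) + eVariationOn f (Icc y z) = eVariationOn f (Icc x z) := by
  simpa only [univ_inter] using eVariationOn.Icc_add_Icc f hxy hyz (mem_univ y)

theorem eVariationOn_Icc_add_const {α : Type*} [PseudoEMetricSpace α] (f : ℝ → α) (x y c : ℝ) :
    eVariationOn f (Icc (x + c) (y + c)) = eVariationOn (fun t => f (t + c)) (Icc x y) := by
  rw [← image_add_const_Icc]
  exact (eVariationOn.comp_eq_of_monotoneOn f (· + c)
    fun _ _ _ _ h => add_le_add_left h c).symm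

theorem Function.Periodic.eVariationOn_Icc_add_period {α : Type*} [PseudoEMetricSpace α]
    {f : ℝ → α} {p : ℝ} (hf : Periodic f p) (hp : 0 < p) (a b : ℝ) :
    eVariationOn f (Icc b (b + p)) = eVariationOn f (Icc a (a + p)) := by
  have shift : ∀ (n : ℤ) (x y : ℝ),
      eVariationOn f (Icc (x + n * p) (y + n * p)) = eVariationOn f (Icc x y) := by
    intro n x y
    rw [eVariationOn_Icc_add_const]
    exact congrArg (eVariationOn · _) (funext (hf.int_mul n))
  set b' := toIcoMod hp a b
  have hb' := toIcoMod_mem_Ico hp a b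
  have hb : b = b' + toIcoDiv hp a b * p := (toIcoMod_add_toIcoDiv_mul hp a b).symm
  have hshift1 := shift 1 a b'
  rw [Int.cast_one, one_mul] at hshift1
  calc eVariationOn f (Icc b (b + p))
      = eVariationOn f (Icc b' (b' + p)) := by
        rw [hb, add_right_comm, shift]
    _ = eVariationOn f (Icc b' (a + p)) + eVariationOn f (Icc a b') := by
        rw [← hshift1, eVariationOn_Icc_add_Icc f (by linarith [hb'.2]) (by linarith [hb'.1])]
    _ = eVariationOn f (Icc a (a + p)) := by
        rw [add_comm, eVariationOn_Icc_add_Icc f hb'.1 hb'.2.le]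

theorem LipschitzOnWith.eVariationOn_le {α : Type*} [PseudoEMetricSpace α] {K : NNReal}
    {f : ℝ → α} {a b : ℝ} (hf : LipschitzOnWith K f (Icc a b)) :
    eVariationOn f (Icc a b) ≤ K * ENNReal.ofReal (b - a) :=
  eVariationOn_id_Icc a b ▸ hf.comp_eVariationOn_le (g := id) (mapsTo_id _)

theorem LipschitzOnWith.eVariationOn_eq_of_Icc_subset {α : Type*} [PseudoEMetricSpace α]
    {K : NNReal} {f : ℝ → α} {a b c d : ℝ} (hf : LipschitzOnWith K f (Icc a b))
    (hvar : eVariationOn f (Icc a b) = K * ENNReal.ofReal (b - a))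
    (hac : a ≤ c) (hcd : c ≤ d) (hdb : d ≤ b) :
    eVariationOn f (Icc c d) = K * ENNReal.ofReal (d - c) := by
  have hle : ∀ {x y}, a ≤ x → y ≤ b → eVariationOn f (Icc x y) ≤ K * ENNReal.ofReal (y - x) :=
    fun hx hy => (hf.mono (Icc_subset_Icc hx hy)).eVariationOn_le
  have hlen : K * ENNReal.ofReal (b - a) = K * ENNReal.ofReal (c - a) +
      K * ENNReal.ofReal (d - c) + K * ENNReal.ofReal (b - d) := by
    rw [← mul_add, ← mul_add, ← ENNReal.ofReal_add (by linarith) (by linarith),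
      ← ENNReal.ofReal_add (by linarith) (by linarith)]
    ring_nf
  refine le_antisymm (hle hac hdb) ?_
  have key : K * ENNReal.ofReal (c - a) + K * ENNReal.ofReal (d - c) + K * ENNReal.ofReal (b - d)
      ≤ K * ENNReal.ofReal (c - a) + eVariationOn f (Icc c d) + K * ENNReal.ofReal (b - d) := by
    rw [← hlen, ← hvar, ← eVariationOn_Icc_add_Icc f (hac.trans hcd) hdb,
      ← eVariationOn_Icc_add_Icc f hac hcd]
    gcongr
    · exact hle le_rfl (hcd.trans hdb)
    · exact hle (hac.trans hcd) le_rfl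
  exact (ENNReal.add_le_add_iff_left (by finiteness)).1
    ((ENNReal.add_le_add_iff_right (by finiteness)).1 key)

theorem IsCompact.isCompact_convexHull {E : Type*} [NormedAddCommGroup E] [NormedSpace ℝ E]
    [FiniteDimensional ℝ E] {s : Set E} (hs : IsCompact s) : IsCompact (convexHull ℝ s) := by
  rcases s.eq_empty_or_nonempty with rfl | ⟨z₀, hz₀⟩
  · simp
  -- Carathéodory: every point of the hull is a convex combination of `finrank + 1` points of `s`
  set N := Module.finrank ℝ E + 1
  let Φ : (Fin N → ℝ) × (Fin N → E) → E := fun q => ∑ i, q.1 i • q.2 i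
  suffices convexHull ℝ s = Φ '' (stdSimplex ℝ (Fin N) ×ˢ univ.pi fun _ => s) by
    rw [this]
    exact ((isCompact_stdSimplex ℝ _).prod (isCompact_univ_pi fun _ => hs)).image (by fun_prop)
  refine Subset.antisymm (fun x hx => ?_) ?_
  · obtain ⟨ι, _, z, w, hzs, hz, hw0, hw1, rfl⟩ := eq_pos_convex_span_of_mem_convexHull hx
    obtain ⟨e⟩ : Nonempty (ι ↪ Fin N) := Function.Embedding.nonempty_of_card_le <| by
      simpa [N] using
        hz.card_le_finrank_succ.trans (Nat.add_le_add_right (Submodule.finrank_le _) 1)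
    classical
    let w' := Function.extend e w 0
    let z' := Function.extend e z fun _ => z₀
    have hw'0 : ∀ j ∉ range e, w' j = 0 := fun j hj => Function.extend_apply' _ _ _ hj
    have hw' : ∀ i, w' (e i) = w i := e.injective.extend_apply _ _
    have hz' : ∀ i, z' (e i) = z i := e.injective.extend_apply _ _
    refine ⟨(w', z'), ⟨⟨fun j => ?_, ?_⟩, fun j _ => ?_⟩, ?_⟩
    · by_cases hj : j ∈ range e
      · obtain ⟨i, rfl⟩ := hj
        show 0 ≤ w' (e i)
        exact hw' i ▸ (hw0 i).le
      · exact (hw'0 j hj).ge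
    · rw [← hw1]
      exact (Fintype.sum_of_injective e e.injective w w' hw'0 fun i => (hw' i).symm).symm
    · by_cases hj : j ∈ range e
      · obtain ⟨i, rfl⟩ := hj
        show z' (e i) ∈ s
        exact hz' i ▸ hzs (mem_range_self i)
      · simpa [z', Function.extend_apply' _ _ _ hj] using hz₀
    · exact (Fintype.sum_of_injective e e.injective _ (fun j => w' j • z' j)
        (fun j hj => by simp [hw'0 j hj]) fun i => by simp [hw', hz']).symm
  · rintro _ ⟨⟨w, z⟩, ⟨hw, hz⟩, rfl⟩
    exact (convex_convexHull ℝ s).sum_mem (fun i _ => hw.1 i) hw.2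
      fun i _ => subset_convexHull ℝ s (hz i (mem_univ i))

theorem sphere_subset_convexHull_of_subset_union {F : Type*} [NormedAddCommGroup F]
    [InnerProductSpace ℝ F] [CompleteSpace F] {s t : Set F} {r : ℝ} (hr : r < 1)
    (hs : ∀ x ∈ s, ‖x‖ ≤ r) (ht : (0 : F) ∈ t) (htc : IsClosed (convexHull ℝ t))
    (hst : Metric.sphere (0 : F) 1 ⊆ convexHull ℝ (s ∪ t)) :
    Metric.sphere (0 : F) 1 ⊆ convexHull ℝ t := by
  intro x hx
  by_contra hxt
  obtain ⟨f, u, hfu, hux⟩ := geometric_hahn_banach_closed_point (convex_convexHull ℝ t) htc hxt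
  set v := (InnerProductSpace.toDual ℝ F).symm f
  have hfv : ∀ y, f y = inner ℝ v y := fun y => (InnerProductSpace.toDual_symm_apply).symm
  have hu : 0 < u := by simpa using hfu 0 (subset_convexHull ℝ t ht)
  have hfx : f x ≤ ‖v‖ := by
    simpa [hfv, mem_sphere_zero_iff_norm.1 hx] using real_inner_le_norm v x
  have hv : 0 < ‖v‖ := by linarith
  -- the unit vector `v / ‖v‖` lies in the hull, but `f` is `< ‖v‖` on all of `s ∪ t`
  have hhalf : convexHull ℝ (s ∪ t) ⊆ {y | f y < ‖v‖} := by
    refine convexHull_min (union_subset (fun y hy => ?_) fun y hy => ?_)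
      (convex_halfSpace_lt f.isLinear _)
    · calc f y ≤ ‖v‖ * ‖y‖ := hfv y ▸ real_inner_le_norm v y
        _ ≤ ‖v‖ * r := by gcongr; exact hs y hy
        _ < ‖v‖ := by nlinarith
    · exact (hfu y (subset_convexHull ℝ t hy)).trans (hux.trans_le hfx)
  have hunit : ‖v‖⁻¹ • v ∈ Metric.sphere (0 : F) 1 := by
    simp [norm_smul, hv.ne']
  have := hhalf (hst hunit)
  simp only [mem_ofPred_eq, hfv, real_inner_smul_right, real_inner_self_eq_norm_sq] at this
  field_simp at this
  exact lt_irrefl _ this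

theorem Set.Infinite.exists_lt_sub_lt {s : Set ℝ} (hs : s.Infinite) {a b : ℝ}
    (hab : s ⊆ Icc a b) {ε : ℝ} (hε : 0 < ε) : ∃ x ∈ s, ∃ y ∈ s, x < y ∧ y - x < ε := by
  have hmaps : MapsTo (fun x => ⌊x / ε⌋) s (Icc ⌊a / ε⌋ ⌊b / ε⌋) := fun x hx =>
    ⟨Int.floor_le_floor (by gcongr; exact (hab hx).1),
      Int.floor_le_floor (by gcongr; exact (hab hx).2)⟩
  obtain ⟨x, hx, y, hy, hxy, hfl⟩ := hs.exists_ne_map_eq_of_mapsTo hmaps (finite_Icc _ _)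
  have hclose : |x - y| < ε := by
    have := Int.abs_sub_lt_one_of_floor_eq_floor hfl
    rwa [← sub_div, abs_div, abs_of_pos hε, div_lt_one hε] at this
  rcases hxy.lt_or_gt with h | h
  · exact ⟨x, hx, y, hy, h, by rw [abs_sub_comm] at hclose; exact (le_abs_self _).trans_lt hclose⟩
  · exact ⟨y, hy, x, hx, h, (le_abs_self _).trans_lt hclose⟩

theorem periodic_liftCurve (L : ℝ) (γ : AddCircle L → E3) : Function.Periodic (liftCurve L γ) L :=
  fun s => congrArg γ (AddCircle.coe_add_period L s)

theorem range_eq_image_liftCurve {L : ℝ} [Fact (0 < L)] (γ : AddCircle L → E3) (a : ℝ) :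
    range γ = liftCurve L γ '' Icc a (a + L) := by
  rw [← image_univ, ← AddCircle.coe_image_Icc_eq L a, image_image]
  rfl

theorem liftCurve_liftIco {p : ℝ} [hp : Fact (0 < p)] (a : ℝ) (F : ℝ → E3) :
    liftCurve p (AddCircle.liftIco p a F) = fun s => F (toIcoMod hp.out a s) :=
  rfl

theorem eqOn_comp_toIcoMod {α : Type*} {p a : ℝ} (hp : 0 < p) {F : ℝ → α} (hFa : F a = F (a + p)) :
    EqOn (fun s => F (toIcoMod hp a s)) F (Icc a (a + p)) := by
  intro s hs
  rcases hs.2.eq_or_lt with rfl | hlt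
  · simp only [toIcoMod_add_right, toIcoMod_eq_self hp |>.2 ⟨le_rfl, lt_add_of_pos_right a hp⟩, hFa]
  · simp only [toIcoMod_eq_self hp |>.2 ⟨hs.1, hlt⟩]

theorem isInspectionCurve_liftIco {p : ℝ} [hp : Fact (0 < p)] {a : ℝ} {F : ℝ → E3}
    (hF : LipschitzOnWith 1 F (Icc a (a + p))) (hFa : F a = F (a + p))
    (hvar : eVariationOn F (Icc a (a + p)) = ENNReal.ofReal p)
    (hsphere : Metric.sphere (0 : E3) 1 ⊆ convexHull ℝ (F '' Icc a (a + p))) :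
    IsInspectionCurve p (AddCircle.liftIco p a F) := by
  have hEq := eqOn_comp_toIcoMod hp.out hFa
  refine ⟨hp.out, AddCircle.liftIco_continuous hFa hF.continuousOn, ?_, ?_, ?_⟩
  · rw [liftCurve_liftIco]
    exact hF.lipschitzWith_comp_toIcoMod hp.out hFa
  · have hper : Function.Periodic (fun s => F (toIcoMod hp.out a s)) p :=
      fun s => by simp only [toIcoMod_add_right]
    have := hper.eVariationOn_Icc_add_period hp.out a 0
    rw [zero_add] at this
    rw [liftCurve_liftIco, this, eVariationOn.eq_of_eqOn hEq, hvar]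
  · rw [range_eq_image_liftCurve _ a, liftCurve_liftIco, hEq.image_eq]
    exact hsphere

theorem IsInspectionCurve.exists_shortcut {L : ℝ} {γ : AddCircle L → E3}
    (hγ : IsInspectionCurve L γ) {s₁ s₂ : ℝ} (h12 : s₁ < s₂) (h21 : s₂ < s₁ + L)
    (hshort : s₂ - s₁ < 1) (h₁ : liftCurve L γ s₁ = 0) (h₂ : liftCurve L γ s₂ = 0) :
    ∃ γ' : AddCircle (L - (s₂ - s₁)) → E3, IsInspectionCurve (L - (s₂ - s₁)) γ' := by
  obtain ⟨hL, -, hlip, hvar, hsphere⟩ := hγ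
  have : Fact (0 < L) := ⟨hL⟩
  have : Fact (0 < L - (s₂ - s₁)) := ⟨by linarith⟩
  set f := liftCurve L γ
  have hper : Function.Periodic f L := periodic_liftCurve L γ
  have hend : s₂ + (L - (s₂ - s₁)) = s₁ + L := by ring
  refine ⟨_, isInspectionCurve_liftIco (a := s₂) (F := f) hlip.lipschitzOnWith ?_ ?_ ?_⟩
  · rw [hend, hper, h₁, h₂]
  · have hfull :
        eVariationOn f (Icc s₁ (s₁ + L)) = (1 : NNReal) * ENNReal.ofReal (s₁ + L - s₁) := by
      have := hper.eVariationOn_Icc_add_period hL 0 s₁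
      rw [zero_add] at this
      rw [this, hvar, ENNReal.coe_one, one_mul, add_sub_cancel_left]
    have := hlip.lipschitzOnWith.eVariationOn_eq_of_Icc_subset hfull h12.le h21.le le_rfl
    rw [hend, this, ENNReal.coe_one, one_mul]
    congr 1
    ring
  · rw [hend]
    refine sphere_subset_convexHull_of_subset_union (s := f '' Icc s₁ s₂) hshort ?_
      ⟨s₂, ⟨le_rfl, h21.le⟩, h₂⟩ (isCompact_Icc.image hlip.continuous).isCompact_convexHull.isClosed
      ?_
    · rintro _ ⟨u, hu, rfl⟩
      calc ‖f u‖ = dist (f u) (f s₁) := by rw [h₁, dist_zero_right]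
        _ ≤ dist u s₁ := by simpa using hlip.dist_le_mul u s₁
        _ ≤ s₂ - s₁ := by rw [Real.dist_eq, abs_of_nonneg (by linarith [hu.1])]; linarith [hu.2]
    · rw [← image_union, Icc_union_Icc_eq_Icc h12.le h21.le, ← range_eq_image_liftCurve]
      exact hsphere

/-- A minimal inspection curve passes through the origin at only finitely
many times. -/
theorem minimal_inspection_finite_zeros
    (L : ℝ) (γ : AddCircle L → E3) (hγ : IsMinInspectionCurve L γ) :
    {t : AddCircle L | γ t = 0}.Finite := by
  obtain ⟨hγ, hmin⟩ := hγ
  have : Fact (0 < L) := ⟨hγ.1⟩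
  by_contra hinf
  have hZ : (Ico 0 L ∩ (↑) ⁻¹' {t : AddCircle L | γ t = 0}).Infinite := by
    have hIco := AddCircle.coe_image_Ico_eq L 0
    rw [zero_add] at hIco
    refine Infinite.of_image ((↑) : ℝ → AddCircle L) ?_
    rwa [image_inter_preimage, hIco, univ_inter]
  obtain ⟨s₁, ⟨hs₁, h₁⟩, s₂, ⟨hs₂, h₂⟩, h12, hshort⟩ :=
    hZ.exists_lt_sub_lt (inter_subset_left.trans Ico_subset_Icc_self) one_pos
  obtain ⟨γ', hγ'⟩ := hγ.exists_shortcut h12 (by linarith [hs₁.1, hs₂.2]) hshort h₁ h₂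
  linarith [hmin _ γ' hγ']
end
end
end

section
/- Let γ: ℝ/L → ℝ³ be a closed rectifiable curve, parameterized with constant unit speed, whose convex hull contains the unit sphere S² centered at the origin. Then the horizon satisfies H(γ) ≥ 8π. -/
open Real Set MeasureTheory ENNReal

noncomputable section


noncomputable section

/-- The horizon of a closed curve `γ : ℝ/L → ℝ³`: the measure in `S²`, counted with
multiplicity, of the set of points `p ∈ S²` whose tangent plane
`T_p S² = {x : ⟨x,p⟩ = 1}` meets `γ`; here `#γ⁻¹(T_p S²)` is realized by counting
parameters in one period `[0, L)`, and the measure on the unit sphere is the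
two-dimensional Hausdorff measure (of total mass `4π`). -/
def horizonCurve (L : ℝ) (γ : AddCircle L → E3) : ℝ≥0∞ :=
  ∫⁻ p in Metric.sphere (0 : E3) 1,
    (({t ∈ Set.Ico (0:ℝ) L | inner ℝ (liftCurve L γ t) p = (1:ℝ)}).encard : ℝ≥0∞) ∂μH[2]


/-! If `p ∈ S²` is not on `γ`, both `p` and `-p` lie in the convex hull of `γ`, so `γ` meets
the half-space `⟨x, p⟩ ≤ -1`. If `γ` also goes beyond the tangent plane `⟨x, p⟩ = 1`, it crosses
that plane on both arcs joining the two sides; otherwise `γ` stays in `⟨x, p⟩ ≤ 1` and `p`, a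
convex combination of points of `γ`, needs at least two of them on the plane. So every point of
`S²` off the curve counts at least twice, and the curve is `μH[2]`-null, being Lipschitz.
Hence `H(γ) ≥ 2 μH[2](S²)`.

For `μH[2](S²) ≥ 4π`, cut the upper hemisphere into thin latitude bands and narrow azimuthal
sectors. Each cell is the image of a planar box of known area under a chart whose inverse is
Lipschitz with constant close to `1`, so the open upper hemisphere has measure at least `2π - ε`
for every `ε > 0`, and so has its mirror image. -/

theorem hausdorffMeasure_le_mul_hausdorffMeasure_image {X Y : Type*} [MetricSpace X]
    [MetricSpace Y] [MeasurableSpace X] [BorelSpace X] [MeasurableSpace Y] [BorelSpace Y]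
    {f : X → Y} {s : Set X} {K : NNReal}
    (hf : ∀ x ∈ s, ∀ y ∈ s, dist x y ≤ K * dist (f x) (f y)) {d : ℝ} (hd : 0 ≤ d) :
    μH[d] s ≤ K ^ d * μH[d] (f '' s) := by
  have hanti : AntilipschitzWith K (s.domRestrict f) :=
    AntilipschitzWith.of_le_mul_dist fun x y => hf x x.2 y y.2
  have := hanti.le_hausdorffMeasure_image hd univ
  rwa [image_univ, range_domRestrict, ← (isometry_subtype_coe (s := s)).hausdorffMeasure_image
    (Or.inl hd), image_univ, Subtype.range_coe] at this

theorem LipschitzWith.hausdorffMeasure_range_eq_zero {X : Type*} [EMetricSpace X]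
    [MeasurableSpace X] [BorelSpace X] {K : NNReal} {f : ℝ → X} (hf : LipschitzWith K f)
    {d : NNReal} (hd : 1 < d) : μH[d] (range f) = 0 :=
  hausdorffMeasure_of_dimH_lt <| hf.dimH_range_le.trans_lt <| by
    rw [Real.dimH_univ]; exact_mod_cast hd

lemma disjoint_Ioc_add_mul {a b : ℝ} {m n : ℕ} (h : m ≠ n) :
    Disjoint (Ioc (a + m * b) (a + (m + 1) * b)) (Ioc (a + n * b) (a + (n + 1) * b)) := by
  have := pairwise_disjoint_Ioc_add_zsmul a b (Int.ofNat_inj.not.2 h)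
  simpa [Function.onFun, zsmul_eq_mul] using this

lemma sq_mul_one_sub_le_two_mul_one_sub_cos {x δ : ℝ} (hx : |x| ≤ δ) (hδ : δ ≤ 1) :
    x ^ 2 * (1 - δ) ≤ 2 * (1 - cos x) := by
  have hcos := (abs_le.mp (cos_bound (hx.trans hδ))).2
  have hx4 : |x| ^ 4 = (x ^ 2) ^ 2 := by rw [← sq_abs x]; ring
  have hxδ : x ^ 2 ≤ δ := by nlinarith [abs_nonneg x, sq_abs x]
  nlinarith [sq_nonneg x]

lemma convex_setOf_lt_union_singleton {E : Type*} [AddCommGroup E] [Module ℝ E]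
    (f : E →ₗ[ℝ] ℝ) {c : ℝ} {a : E} (ha : f a ≤ c) : Convex ℝ ({x | f x < c} ∪ {a}) := by
  refine convex_iff_forall_pos.2 fun x hx y hy s t hs ht hst => ?_
  by_cases hxy : x = a ∧ y = a
  · obtain ⟨rfl, rfl⟩ := hxy
    right; rw [← add_smul, hst, one_smul, mem_singleton_iff]
  · left
    have hfx : f x ≤ c := by rcases hx with hx | rfl; exacts [le_of_lt hx, ha]
    have hfy : f y ≤ c := by rcases hy with hy | rfl; exacts [le_of_lt hy, ha]
    have hlt : f x < c ∨ f y < c := by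
      rcases hx with hx | hx
      · exact Or.inl hx
      rcases hy with hy | hy
      · exact Or.inr hy
      · exact absurd ⟨hx, hy⟩ hxy
    show f (s • x + t • y) < c
    rw [map_add, map_smul, map_smul, smul_eq_mul, smul_eq_mul]
    have hc : c = s * c + t * c := by rw [← add_mul, hst, one_mul]
    rcases hlt with h | h
    · nlinarith [mul_lt_mul_of_pos_left h hs, mul_le_mul_of_nonneg_left hfy ht.le]
    · nlinarith [mul_le_mul_of_nonneg_left hfx hs.le, mul_lt_mul_of_pos_left h ht]

lemma nontrivial_inter_setOf_eq_of_mem_convexHull {E : Type*} [AddCommGroup E] [Module ℝ E]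
    {A : Set E} {f : E →ₗ[ℝ] ℝ} {c : ℝ} {p : E} (hA : ∀ a ∈ A, f a ≤ c)
    (hp : p ∈ convexHull ℝ A) (hpA : p ∉ A) (hpc : f p = c) :
    (A ∩ {x | f x = c}).Nontrivial := by
  by_contra hnt
  rcases (not_nontrivial_iff.1 hnt).eq_empty_or_singleton with h | ⟨a, h⟩
  · have hsub : A ⊆ {x | f x < c} := fun x hx =>
      lt_of_le_of_ne (hA x hx) fun hx' => h.subset ⟨hx, hx'⟩
    exact (convexHull_min hsub (convex_halfSpace_lt f.isLinear c) hp).ne hpc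
  · have ha : a ∈ A ∩ {x | f x = c} := h ▸ rfl
    have hsub : A ⊆ {x | f x < c} ∪ {a} := fun x hx =>
      (lt_or_eq_of_le (hA x hx)).imp id fun hx' => h.subset ⟨hx, hx'⟩
    rcases convexHull_min hsub (convex_setOf_lt_union_singleton f ha.2.le) hp with h' | h'
    · exact (ne_of_lt h') hpc
    · exact hpA (h' ▸ ha.1)

namespace AddCircle

variable {L : ℝ} [Fact (0 < L)]

lemma encard_setOf_mem_Ico (a : ℝ) (P : AddCircle L → Prop) :
    {t ∈ Ico a (a + L) | P t}.encard = {x | P x}.encard := by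
  have hinj : InjOn ((↑) : ℝ → AddCircle L) {t ∈ Ico a (a + L) | P t} := fun s hs t ht hst =>
    (coe_eq_coe_iff_of_mem_Ico hs.1 ht.1).1 hst
  rw [← hinj.encard_image]
  congr 1
  ext x
  obtain ⟨t, ht, rfl⟩ := (coe_image_Ico_eq (p := L) a).symm ▸ mem_univ x
  exact ⟨fun ⟨s, hs, hsx⟩ => hsx ▸ hs.2, fun hx => ⟨t, ⟨ht, hx⟩, rfl⟩⟩

lemma nontrivial_setOf_eq_of_lt_of_lt {G : AddCircle L → ℝ} (hG : Continuous G)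
    {a b : AddCircle L} {c : ℝ} (ha : c < G a) (hb : G b < c) : {x | G x = c}.Nontrivial := by
  obtain ⟨s, rfl⟩ := QuotientAddGroup.mk_surjective a
  obtain ⟨u, hu, rfl⟩ := (coe_image_Ico_eq (p := L) s).symm ▸ mem_univ b
  have hus : s < u := lt_of_le_of_ne hu.1 fun h => by rw [← h] at hb; linarith
  set g : ℝ → ℝ := fun t => G t
  have hg : Continuous g := hG.comp continuous_quotient_mk'
  have hgL : g (s + L) = g s := by simp only [g, coe_add_period]
  obtain ⟨t₁, ht₁, hgt₁⟩ := intermediate_value_Ioo' hus.le hg.continuousOn ⟨hb, ha⟩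
  obtain ⟨t₂, ht₂, hgt₂⟩ := intermediate_value_Ioo hu.2.le hg.continuousOn
    ⟨hb, hgL.symm ▸ ha⟩
  refine ⟨t₁, hgt₁, t₂, hgt₂, fun h => ?_⟩
  rw [coe_eq_coe_iff_of_mem_Ico ⟨ht₁.1.le, by linarith [ht₁.2, hu.2]⟩
    ⟨by linarith [ht₂.1], ht₂.2⟩] at h
  linarith [ht₁.2, ht₂.1]

end AddCircle

def spherePoint (θ z : ℝ) : E3 := !₂[√(1 - z ^ 2) * cos θ, √(1 - z ^ 2) * sin θ, z]

lemma spherePoint_mem_sphere (θ : ℝ) {z : ℝ} (hz : z ^ 2 ≤ 1) :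
    spherePoint θ z ∈ Metric.sphere (0 : E3) 1 := by
  have hR : √(1 - z ^ 2) ^ 2 = 1 - z ^ 2 := sq_sqrt (by linarith)
  rw [mem_sphere_zero_iff_norm, EuclideanSpace.norm_eq, Fin.sum_univ_three, sqrt_eq_one]
  simp only [spherePoint, Real.norm_eq_abs, sq_abs, Fin.isValue, Matrix.cons_val_zero,
    Matrix.cons_val_one, Matrix.cons_val]
  linear_combination (1 - z ^ 2) * cos_sq_add_sin_sq θ + hR * (cos θ ^ 2 + sin θ ^ 2)

lemma dist_spherePoint_sq (θ z θ' z' : ℝ) :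
    dist (spherePoint θ z) (spherePoint θ' z') ^ 2 =
      (√(1 - z ^ 2) - √(1 - z' ^ 2)) ^ 2
        + 2 * √(1 - z ^ 2) * √(1 - z' ^ 2) * (1 - cos (θ - θ')) + (z - z') ^ 2 := by
  rw [EuclideanSpace.dist_eq, sq_sqrt (by positivity), Fin.sum_univ_three]
  simp only [spherePoint, Real.dist_eq, sq_abs, Fin.isValue, Matrix.cons_val_zero,
    Matrix.cons_val_one, Matrix.cons_val, cos_sub]
  linear_combination (√(1 - z ^ 2) ^ 2) * cos_sq_add_sin_sq θ
    + (√(1 - z' ^ 2) ^ 2) * cos_sq_add_sin_sq θ'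

lemma mul_sq_sub_le_dist_spherePoint_sq {θ θ' z z' w δ : ℝ} (hz : z ^ 2 ≤ w)
    (hz' : z' ^ 2 ≤ w) (hw : w ≤ 1) (hθ : |θ - θ'| ≤ δ) (hδ : δ ≤ 1) :
    (1 - w) * (1 - δ) * (θ - θ') ^ 2 ≤ dist (spherePoint θ z) (spherePoint θ' z') ^ 2 := by
  have hw' : √(1 - w) ^ 2 = 1 - w := sq_sqrt (by linarith)
  have hR : √(1 - w) ≤ √(1 - z ^ 2) := sqrt_le_sqrt (by linarith)
  have hR' : √(1 - w) ≤ √(1 - z' ^ 2) := sqrt_le_sqrt (by linarith)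
  have hRR' : 1 - w ≤ √(1 - z ^ 2) * √(1 - z' ^ 2) := by
    rw [← hw', sq]; exact mul_le_mul hR hR' (sqrt_nonneg _) (sqrt_nonneg _)
  have hcos := sq_mul_one_sub_le_two_mul_one_sub_cos hθ hδ
  rw [dist_spherePoint_sq]
  nlinarith [sq_nonneg (√(1 - z ^ 2) - √(1 - z' ^ 2)), sq_nonneg (z - z'),
    mul_le_mul hRR' hcos (by nlinarith [sq_nonneg (θ - θ')]) (by positivity)]

/-- `(√(1 - z²), z)` and `(√(1 - z'²), z')` lie on the unit circle above height `ζ`, so the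
vertical part of the chord between them is at most `√(1 - ζ²)` times its length. -/
lemma sq_sub_le_mul_sq_add_sq {ζ z z' : ℝ} (hζ : 0 ≤ ζ) (hz : ζ ≤ z) (hz' : ζ ≤ z')
    (hz1 : z ^ 2 ≤ 1) (hz1' : z' ^ 2 ≤ 1) :
    (z - z') ^ 2 ≤ (1 - ζ ^ 2) * ((√(1 - z ^ 2) - √(1 - z' ^ 2)) ^ 2 + (z - z') ^ 2) := by
  set R := √(1 - z ^ 2)
  set R' := √(1 - z' ^ 2)
  have hR : R ^ 2 = 1 - z ^ 2 := sq_sqrt (by linarith)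
  have hR' : R' ^ 2 = 1 - z' ^ 2 := sq_sqrt (by linarith)
  have hRζ : R ≤ √(1 - ζ ^ 2) := sqrt_le_sqrt (by nlinarith)
  have hRζ' : R' ≤ √(1 - ζ ^ 2) := sqrt_le_sqrt (by nlinarith)
  have hζ1 : √(1 - ζ ^ 2) ^ 2 = 1 - ζ ^ 2 := sq_sqrt (by nlinarith)
  have hsum : (R + R') ^ 2 ≤ 4 * (1 - ζ ^ 2) := by
    nlinarith [sqrt_nonneg (1 - z ^ 2), sqrt_nonneg (1 - z' ^ 2)]
  have hfactor : (R - R') ^ 2 * (R + R') ^ 2 = (z - z') ^ 2 * (z + z') ^ 2 := by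
    linear_combination (R ^ 2 - R' ^ 2 + z' ^ 2 - z ^ 2) * (hR - hR')
  nlinarith [mul_le_mul_of_nonneg_left hsum (sq_nonneg (R - R')),
    mul_le_mul_of_nonneg_left (show 4 * ζ ^ 2 ≤ (z + z') ^ 2 by nlinarith) (sq_nonneg (z - z'))]

lemma sq_sub_le_mul_dist_spherePoint_sq {ζ z z' : ℝ} (θ θ' : ℝ) (hζ : 0 ≤ ζ) (hz : ζ ≤ z)
    (hz' : ζ ≤ z') (hz1 : z ^ 2 ≤ 1) (hz1' : z' ^ 2 ≤ 1) :
    (z - z') ^ 2 ≤ (1 - ζ ^ 2) * dist (spherePoint θ z) (spherePoint θ' z') ^ 2 := by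
  have hζ1 : 0 ≤ 1 - ζ ^ 2 := by nlinarith
  have hcos : 0 ≤ 2 * √(1 - z ^ 2) * √(1 - z' ^ 2) * (1 - cos (θ - θ')) :=
    mul_nonneg (by positivity) (sub_nonneg.2 (cos_le_one _))
  rw [dist_spherePoint_sq]
  nlinarith [sq_sub_le_mul_sq_add_sq hζ hz hz' hz1 hz1', mul_nonneg hζ1 hcos]

/-- Rescaling azimuth and height by `r = √(1 - z₀²)` makes the inverse of this chart, near
height `z₀`, Lipschitz with constant close to `1` for the sup metric on `ℝ × ℝ`, on which `μH[2]`
is Lebesgue measure. -/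
def bandChart (z₀ : ℝ) (p : ℝ × ℝ) : E3 :=
  spherePoint (p.1 / √(1 - z₀ ^ 2)) (√(1 - z₀ ^ 2) * p.2)

lemma dist_le_mul_dist_bandChart {z₁ z₂ δ K : ℝ} {p q : ℝ × ℝ} (hz₁ : 0 ≤ z₁) (hz₂ : z₂ < 1)
    (hp : √(1 - z₁ ^ 2) * p.2 ∈ Icc z₁ z₂) (hq : √(1 - z₁ ^ 2) * q.2 ∈ Icc z₁ z₂)
    (hpq : |p.1 - q.1| ≤ √(1 - z₁ ^ 2) * δ) (hδ : δ ≤ 1) (hK : 1 ≤ K)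
    (hKz : 1 - z₁ ^ 2 ≤ K ^ 2 * ((1 - z₂ ^ 2) * (1 - δ))) :
    dist p q ≤ K * dist (bandChart z₁ p) (bandChart z₁ q) := by
  have hz12 : z₁ ≤ z₂ := hp.1.trans hp.2
  set r := √(1 - z₁ ^ 2)
  have hr2 : r ^ 2 = 1 - z₁ ^ 2 := sq_sqrt (by nlinarith)
  have hr : 0 < r := sqrt_pos.2 (by nlinarith)
  set d := dist (bandChart z₁ p) (bandChart z₁ q)
  have hθ : |p.1 / r - q.1 / r| ≤ δ := by
    rwa [← sub_div, abs_div, abs_of_pos hr, div_le_iff₀ hr, mul_comm]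
  have hz2 : ∀ z ∈ Icc z₁ z₂, z ^ 2 ≤ z₂ ^ 2 := fun z hz => by nlinarith [hz.1, hz.2]
  have horiz : (p.1 - q.1) ^ 2 ≤ K ^ 2 * d ^ 2 := by
    have h : (1 - z₂ ^ 2) * (1 - δ) * (p.1 / r - q.1 / r) ^ 2 ≤ d ^ 2 :=
      mul_sq_sub_le_dist_spherePoint_sq (hz2 _ hp) (hz2 _ hq) (by nlinarith) hθ hδ
    have hpq' : (p.1 - q.1) ^ 2 = r ^ 2 * (p.1 / r - q.1 / r) ^ 2 := by field_simp
    rw [hpq', hr2]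
    nlinarith [mul_le_mul_of_nonneg_right hKz (sq_nonneg (p.1 / r - q.1 / r)),
      mul_le_mul_of_nonneg_left h (sq_nonneg K)]
  have vert : (p.2 - q.2) ^ 2 ≤ K ^ 2 * d ^ 2 := by
    have h : (r * p.2 - r * q.2) ^ 2 ≤ (1 - z₁ ^ 2) * d ^ 2 :=
      sq_sub_le_mul_dist_spherePoint_sq (p.1 / r) (q.1 / r) hz₁ hp.1 hq.1
        (by nlinarith [hz2 _ hp]) (by nlinarith [hz2 _ hq])
    rw [← mul_sub, mul_pow, hr2] at h
    calc (p.2 - q.2) ^ 2 ≤ d ^ 2 := le_of_mul_le_mul_left h (by nlinarith)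
      _ ≤ K ^ 2 * d ^ 2 := le_mul_of_one_le_left (sq_nonneg d) (by nlinarith)
  have hKd : 0 ≤ K * d := mul_nonneg (by linarith) dist_nonneg
  rw [Prod.dist_eq, Real.dist_eq, Real.dist_eq]
  exact max_le ((sq_le_sq₀ (abs_nonneg _) hKd).1 (by rw [sq_abs, mul_pow]; exact horiz))
    ((sq_le_sq₀ (abs_nonneg _) hKd).1 (by rw [sq_abs, mul_pow]; exact vert))

def azimuth (x : E3) : ℝ := Complex.arg (x 0 + x 1 * Complex.I)

lemma measurable_azimuth : Measurable azimuth :=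
  Complex.measurable_arg.comp (by fun_prop)

lemma azimuth_spherePoint {θ z : ℝ} (hθ : θ ∈ Ioc (-π) π) (hz : z ^ 2 < 1) :
    azimuth (spherePoint θ z) = θ := by
  have hR : 0 < √(1 - z ^ 2) := sqrt_pos.2 (by linarith)
  have h : ((√(1 - z ^ 2) * cos θ : ℝ) : ℂ) + (√(1 - z ^ 2) * sin θ : ℝ) * Complex.I =
      (√(1 - z ^ 2) : ℂ) * (Complex.cos θ + Complex.sin θ * Complex.I) := by
    push_cast; ring
  rw [azimuth, show spherePoint θ z 0 = √(1 - z ^ 2) * cos θ from rfl,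
    show spherePoint θ z 1 = √(1 - z ^ 2) * sin θ from rfl, h, Complex.arg_real_mul _ hR,
    Complex.arg_cos_add_sin_mul_I hθ]

def sphereCell (z₁ z₂ θ₁ θ₂ : ℝ) : Set E3 :=
  Metric.sphere 0 1 ∩ (fun x => (x 2, azimuth x)) ⁻¹' (Ioc z₁ z₂ ×ˢ Ioc θ₁ θ₂)

lemma measurableSet_sphereCell (z₁ z₂ θ₁ θ₂ : ℝ) : MeasurableSet (sphereCell z₁ z₂ θ₁ θ₂) :=
  Metric.isClosed_sphere.measurableSet.inter <|
    ((by fun_prop : Measurable fun x : E3 => x 2).prodMk measurable_azimuth)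
      (measurableSet_Ioc.prod measurableSet_Ioc)

lemma bandChart_mem_sphereCell {z₁ z₂ θ₁ θ₂ : ℝ} {p : ℝ × ℝ} (hz₁ : -1 ≤ z₁) (hz₂ : z₂ < 1)
    (hθ₁ : -π ≤ θ₁) (hθ₂ : θ₂ ≤ π) (hθ : p.1 / √(1 - z₁ ^ 2) ∈ Ioc θ₁ θ₂)
    (hz : √(1 - z₁ ^ 2) * p.2 ∈ Ioc z₁ z₂) : bandChart z₁ p ∈ sphereCell z₁ z₂ θ₁ θ₂ := by
  have hz1 : (√(1 - z₁ ^ 2) * p.2) ^ 2 < 1 := by nlinarith [hz.1, hz.2]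
  refine ⟨spherePoint_mem_sphere _ hz1.le, hz, ?_⟩
  change azimuth (spherePoint _ _) ∈ _
  rwa [azimuth_spherePoint ⟨by linarith [hθ.1], hθ.2.trans hθ₂⟩ hz1]

lemma ofReal_le_mul_hausdorffMeasure_sphereCell {z₁ z₂ θ₁ θ₂ K : ℝ} (hz₁ : 0 ≤ z₁)
    (hz : z₁ ≤ z₂) (hz₂ : z₂ < 1) (hθ₁ : -π ≤ θ₁) (hθ : θ₁ ≤ θ₂) (hθ₂ : θ₂ ≤ π)
    (hθ1 : θ₂ - θ₁ ≤ 1) (hK : 1 ≤ K)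
    (hKz : 1 - z₁ ^ 2 ≤ K ^ 2 * ((1 - z₂ ^ 2) * (1 - (θ₂ - θ₁)))) :
    ENNReal.ofReal ((θ₂ - θ₁) * (z₂ - z₁)) ≤
      ENNReal.ofReal (K ^ 2) * μH[2] (sphereCell z₁ z₂ θ₁ θ₂) := by
  set r := √(1 - z₁ ^ 2)
  have hr : 0 < r := sqrt_pos.2 (by nlinarith)
  set B := Ioc (r * θ₁) (r * θ₂) ×ˢ Ioc (z₁ / r) (z₂ / r)
  have hB : ∀ p ∈ B, p.1 / r ∈ Ioc θ₁ θ₂ ∧ r * p.2 ∈ Ioc z₁ z₂ := fun p ⟨⟨hu₁, hu₂⟩, hv₁, hv₂⟩ =>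
    ⟨⟨by rwa [lt_div_iff₀ hr, mul_comm], by rwa [div_le_iff₀ hr, mul_comm]⟩,
      by rwa [div_lt_iff₀ hr, mul_comm] at hv₁, by rwa [le_div_iff₀ hr, mul_comm] at hv₂⟩
  have hmaps : bandChart z₁ '' B ⊆ sphereCell z₁ z₂ θ₁ θ₂ := by
    rintro _ ⟨p, hp, rfl⟩
    exact bandChart_mem_sphereCell (by linarith) hz₂ hθ₁ hθ₂ (hB p hp).1 (hB p hp).2
  have hdist : ∀ p ∈ B, ∀ q ∈ B,
      dist p q ≤ K.toNNReal * dist (bandChart z₁ p) (bandChart z₁ q) := by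
    intro p hp q hq
    rw [Real.coe_toNNReal _ (by linarith)]
    refine dist_le_mul_dist_bandChart hz₁ hz₂ (Ioc_subset_Icc_self (hB p hp).2)
      (Ioc_subset_Icc_self (hB q hq).2) ?_ hθ1 hK hKz
    rw [abs_le]
    constructor <;> nlinarith [hp.1.1, hp.1.2, hq.1.1, hq.1.2]
  have hvol : μH[2] B = ENNReal.ofReal ((θ₂ - θ₁) * (z₂ - z₁)) := by
    rw [hausdorffMeasure_prod_real, Measure.volume_eq_prod, Measure.prod_prod, Real.volume_Ioc,
      Real.volume_Ioc, ← ENNReal.ofReal_mul (by nlinarith)]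
    congr 1
    field_simp
  have hK2 : (K.toNNReal : ℝ≥0∞) ^ (2 : ℝ) = ENNReal.ofReal (K ^ 2) := by
    rw [ENNReal.rpow_two, ← ENNReal.ofReal.eq_def, ← ENNReal.ofReal_pow (by linarith)]
  calc ENNReal.ofReal ((θ₂ - θ₁) * (z₂ - z₁)) = μH[2] B := hvol.symm
    _ ≤ (K.toNNReal : ℝ≥0∞) ^ (2 : ℝ) * μH[2] (bandChart z₁ '' B) :=
      hausdorffMeasure_le_mul_hausdorffMeasure_image hdist zero_le_two
    _ ≤ ENNReal.ofReal (K ^ 2) * μH[2] (sphereCell z₁ z₂ θ₁ θ₂) := by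
      rw [hK2]; gcongr

lemma one_sub_sq_le_mul_one_sub_add_sq {z Δ K h : ℝ} (hz : 0 ≤ z) (hΔ : 0 ≤ Δ) (hh : 0 ≤ h)
    (hzΔ : z + Δ ≤ 1 - h) (hK : 1 ≤ K) (hΔK : 2 * Δ ≤ (K - 1) * h) :
    1 - z ^ 2 ≤ K * (1 - (z + Δ) ^ 2) := by
  have h1 : h ≤ 1 - (z + Δ) ^ 2 := by nlinarith
  have h2 : (z + Δ) ^ 2 - z ^ 2 ≤ 2 * Δ := by nlinarith
  nlinarith [mul_le_mul_of_nonneg_left h1 (by linarith : 0 ≤ K - 1)]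

lemma ofReal_le_mul_hausdorffMeasure_sphereCell_of_lt {N j k : ℕ} {Δ δ K : ℝ} (hj : j < N)
    (hΔ : 0 < Δ) (hδ : 0 < δ) (hkδ : (k + 1) * δ ≤ 2 * π) (hK : 1 ≤ K)
    (hKδ : 1 ≤ K * (1 - δ)) (hKΔ : 2 * Δ ≤ (K - 1) * (1 - N * Δ)) :
    ENNReal.ofReal (δ * Δ) ≤ ENNReal.ofReal (K ^ 2) *
      μH[2] (sphereCell (j * Δ) ((j + 1) * Δ) (-π + k * δ) (-π + (k + 1) * δ)) := by
  have hδ1 : δ ≤ 1 := by nlinarith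
  have hj' : (j : ℝ) + 1 ≤ N := by exact_mod_cast hj
  have hNΔ : N * Δ < 1 := by nlinarith
  have hz₂ : (j + 1) * Δ < 1 := by nlinarith
  have hKz : 1 - (j * Δ) ^ 2 ≤ K ^ 2 * ((1 - ((j + 1) * Δ) ^ 2) * (1 - δ)) := by
    have hband := one_sub_sq_le_mul_one_sub_add_sq (z := j * Δ) (by positivity) hΔ.le
      (by nlinarith) (by nlinarith) hK hKΔ
    have hnn : 0 ≤ K * (1 - ((j + 1) * Δ) ^ 2) :=
      mul_nonneg (by linarith) (by nlinarith [show 0 ≤ (j + 1) * Δ by positivity])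
    calc 1 - (j * Δ) ^ 2 ≤ K * (1 - ((j + 1) * Δ) ^ 2) := by rwa [add_mul, one_mul]
      _ ≤ K * (1 - ((j + 1) * Δ) ^ 2) * (K * (1 - δ)) := le_mul_of_one_le_right hnn hKδ
      _ = _ := by ring
  have h := ofReal_le_mul_hausdorffMeasure_sphereCell (z₁ := j * Δ) (z₂ := (j + 1) * Δ)
    (θ₁ := -π + k * δ) (θ₂ := -π + (k + 1) * δ) (by positivity) (by nlinarith) hz₂
    (by nlinarith [pi_pos]) (by nlinarith) (by linarith) (by linarith) hK
    (hKz.trans_eq (by ring))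
  convert h using 2; ring

lemma ofReal_le_mul_hausdorffMeasure_upperHemisphere {N M : ℕ} {Δ K : ℝ} (hM : 0 < M)
    (hΔ : 0 < Δ) (hK : 1 ≤ K) (hKδ : 1 ≤ K * (1 - 2 * π / M))
    (hKΔ : 2 * Δ ≤ (K - 1) * (1 - N * Δ)) :
    ENNReal.ofReal (2 * π * (N * Δ)) ≤
      ENNReal.ofReal (K ^ 2) * μH[2] (Metric.sphere (0 : E3) 1 ∩ {x | 0 < x 2}) := by
  set δ := 2 * π / M
  have hMδ : M * δ = 2 * π := by simp only [δ]; field_simp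
  set C : ℕ × ℕ → Set E3 := fun jk =>
    sphereCell (jk.1 * Δ) ((jk.1 + 1) * Δ) (-π + jk.2 * δ) (-π + (jk.2 + 1) * δ)
  set I := Finset.range N ×ˢ Finset.range M
  have hcell : ∀ jk ∈ I, ENNReal.ofReal (δ * Δ) ≤ ENNReal.ofReal (K ^ 2) * μH[2] (C jk) := by
    rintro ⟨j, k⟩ hjk
    obtain ⟨hj, hk⟩ := Finset.mem_product.1 hjk
    have hk' : (k : ℝ) + 1 ≤ M := by exact_mod_cast Finset.mem_range.1 hk
    exact ofReal_le_mul_hausdorffMeasure_sphereCell_of_lt (Finset.mem_range.1 hj) hΔ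
      (by positivity) (hMδ ▸ mul_le_mul_of_nonneg_right hk' (by positivity)) hK hKδ hKΔ
  have hdisj : (I : Set (ℕ × ℕ)).PairwiseDisjoint C := by
    rintro ⟨j, k⟩ - ⟨j', k'⟩ - hne
    refine Disjoint.mono inter_subset_right inter_subset_right (Disjoint.preimage _ ?_)
    rw [disjoint_prod]
    by_cases hj : j = j'
    · subst hj
      exact Or.inr (disjoint_Ioc_add_mul fun hk => hne (Prod.ext rfl hk))
    · exact Or.inl (by simpa using disjoint_Ioc_add_mul (a := 0) (b := Δ) hj)
  have hsub : (⋃ jk ∈ I, C jk) ⊆ Metric.sphere (0 : E3) 1 ∩ {x | 0 < x 2} := by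
    simp only [iUnion_subset_iff]
    rintro ⟨j, k⟩ - x ⟨hx, hz, -⟩
    exact ⟨hx, lt_of_le_of_lt (by positivity) hz.1⟩
  calc ENNReal.ofReal (2 * π * (N * Δ)) = ∑ _jk ∈ I, ENNReal.ofReal (δ * Δ) := by
        rw [Finset.sum_const, Finset.card_product, Finset.card_range, Finset.card_range,
          nsmul_eq_mul, ← hMδ, ← ENNReal.ofReal_natCast, ← ENNReal.ofReal_mul (by positivity)]
        push_cast
        ring_nf
    _ ≤ ∑ jk ∈ I, ENNReal.ofReal (K ^ 2) * μH[2] (C jk) := Finset.sum_le_sum hcell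
    _ = ENNReal.ofReal (K ^ 2) * μH[2] (⋃ jk ∈ I, C jk) := by
        rw [← Finset.mul_sum, measure_biUnion_finset hdisj fun jk _ => measurableSet_sphereCell ..]
    _ ≤ _ := by gcongr

lemma two_mul_hausdorffMeasure_upperHemisphere_le :
    2 * μH[2] (Metric.sphere (0 : E3) 1 ∩ {x | 0 < x 2}) ≤ μH[2] (Metric.sphere (0 : E3) 1) := by
  set U := Metric.sphere (0 : E3) 1 ∩ {x | 0 < x 2}
  have hU : MeasurableSet U :=
    Metric.isClosed_sphere.measurableSet.inter (measurableSet_lt measurable_const (by fun_prop))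
  have hneg : μH[2] (-U) = μH[2] U := by
    rw [← image_neg_eq_neg]; exact (IsometryEquiv.neg E3).hausdorffMeasure_image 2 U
  have hdisj : Disjoint U (-U) := disjoint_left.2 fun x hx hx' => by
    have h : 0 < -x 2 := hx'.2
    have h' : 0 < x 2 := hx.2
    linarith
  have hsub : U ∪ -U ⊆ Metric.sphere (0 : E3) 1 := union_subset inter_subset_left
    fun x hx => by simpa using hx.1
  calc 2 * μH[2] U = μH[2] (U ∪ -U) := by rw [measure_union hdisj hU.neg, hneg, two_mul]
    _ ≤ _ := measure_mono hsub

lemma ofReal_le_mul_hausdorffMeasure_sphere {h K : ℝ} (hh : h ∈ Ioo 0 1) (hK : 1 < K) :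
    ENNReal.ofReal (4 * π * (1 - h)) ≤
      ENNReal.ofReal (K ^ 2) * μH[2] (Metric.sphere (0 : E3) 1) := by
  obtain ⟨hh0, hh1⟩ := hh
  have hK0 : 0 < 1 - K⁻¹ := sub_pos.2 (inv_lt_one_of_one_lt₀ hK)
  obtain ⟨M, hM⟩ := exists_nat_gt (2 * π / (1 - K⁻¹))
  have hM0 : (0 : ℝ) < M := lt_trans (by positivity) hM
  have hKδ : 1 ≤ K * (1 - 2 * π / M) := by
    rw [div_lt_iff₀ hK0, ← div_lt_iff₀' hM0] at hM
    have := mul_le_mul_of_nonneg_left hM.le (by linarith : 0 ≤ K)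
    rw [mul_sub, mul_inv_cancel₀ (by linarith)] at this
    linarith
  obtain ⟨N, hN⟩ := exists_nat_gt (2 * (1 - h) / ((K - 1) * h))
  have hKh : 0 < (K - 1) * h := mul_pos (sub_pos.2 hK) hh0
  have hN0 : (0 : ℝ) < N := lt_trans (by positivity) hN
  have hNΔ : N * ((1 - h) / N) = 1 - h := by field_simp
  have hKΔ : 2 * ((1 - h) / N) ≤ (K - 1) * (1 - N * ((1 - h) / N)) := by
    rw [hNΔ, show (1 : ℝ) - (1 - h) = h by ring, mul_div_assoc', div_le_iff₀ hN0]
    rw [div_lt_iff₀ hKh] at hN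
    linarith
  have hU := ofReal_le_mul_hausdorffMeasure_upperHemisphere (Nat.cast_pos.1 hM0)
    (div_pos (by linarith) hN0) hK.le hKδ hKΔ
  rw [hNΔ] at hU
  calc ENNReal.ofReal (4 * π * (1 - h)) = 2 * ENNReal.ofReal (2 * π * (1 - h)) := by
        rw [← ENNReal.ofReal_ofNat 2, ← ENNReal.ofReal_mul zero_le_two]; ring_nf
    _ ≤ 2 * (ENNReal.ofReal (K ^ 2) * μH[2] (Metric.sphere (0 : E3) 1 ∩ {x | 0 < x 2})) := by
        gcongr
    _ ≤ _ := by
        rw [mul_left_comm]; gcongr; exact two_mul_hausdorffMeasure_upperHemisphere_le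

theorem four_pi_le_hausdorffMeasure_sphere :
    ENNReal.ofReal (4 * π) ≤ μH[2] (Metric.sphere (0 : E3) 1) := by
  have key : ∀ h ∈ Ioo (0 : ℝ) 1,
      ENNReal.ofReal (4 * π * (1 - h) ^ 3) ≤ μH[2] (Metric.sphere (0 : E3) 1) := by
    intro h hh
    have h1 : 0 < 1 - h := sub_pos.2 hh.2
    have := ofReal_le_mul_hausdorffMeasure_sphere hh (one_lt_inv₀ h1 |>.2 (by linarith [hh.1]))
    calc ENNReal.ofReal (4 * π * (1 - h) ^ 3)
        = ENNReal.ofReal ((1 - h) ^ 2) * ENNReal.ofReal (4 * π * (1 - h)) := by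
          rw [← ENNReal.ofReal_mul (by positivity)]; ring_nf
      _ ≤ ENNReal.ofReal ((1 - h) ^ 2) * (ENNReal.ofReal ((1 - h)⁻¹ ^ 2) * μH[2] _) := by
          gcongr
      _ = _ := by
          rw [← mul_assoc, ← ENNReal.ofReal_mul (by positivity), ← mul_pow,
            mul_inv_cancel₀ h1.ne', one_pow, ENNReal.ofReal_one, one_mul]
  have hlim : Filter.Tendsto (fun h : ℝ => ENNReal.ofReal (4 * π * (1 - h) ^ 3))
      (nhdsWithin 0 (Ioo 0 1)) (nhds (ENNReal.ofReal (4 * π))) := by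
    have : Continuous fun h : ℝ => ENNReal.ofReal (4 * π * (1 - h) ^ 3) :=
      ENNReal.continuous_ofReal.comp (by fun_prop)
    simpa using (this.tendsto 0).mono_left nhdsWithin_le_nhds
  have : (nhdsWithin (0 : ℝ) (Ioo 0 1)).NeBot := left_nhdsWithin_Ioo_neBot zero_lt_one
  exact le_of_tendsto hlim (eventually_nhdsWithin_of_forall key)

lemma two_le_encard_setOf_inner_eq_one {L : ℝ} {γ : AddCircle L → E3} (hL : 0 < L)
    (hc : Continuous γ) (hhull : Metric.sphere (0 : E3) 1 ⊆ convexHull ℝ (range γ)) {p : E3}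
    (hp : p ∈ Metric.sphere (0 : E3) 1) (hpγ : p ∉ range γ) :
    2 ≤ {t ∈ Ico (0 : ℝ) L | inner ℝ (liftCurve L γ t) p = (1 : ℝ)}.encard := by
  have : Fact (0 < L) := ⟨hL⟩
  set f : E3 →ₗ[ℝ] ℝ := (innerₗ E3).flip p
  have hfp : f p = 1 := by
    simp only [f, flip_innerₗ, innerₗ_apply_apply, real_inner_self_eq_norm_sq,
      mem_sphere_zero_iff_norm.1 hp, one_pow]
  have hcount := AddCircle.encard_setOf_mem_Ico 0 fun x => f (γ x) = 1
  rw [zero_add] at hcount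
  change 2 ≤ {t ∈ Ico 0 L | f (γ t) = 1}.encard
  rw [hcount]
  refine Order.add_one_le_of_lt (one_lt_encard_iff_nontrivial.2 ?_)
  obtain ⟨_, ⟨b, rfl⟩, hb⟩ := (f.concaveOn convex_univ).exists_le_of_mem_convexHull
    (subset_univ _) (hhull (by simpa using hp : -p ∈ Metric.sphere (0 : E3) 1))
  rw [map_neg, hfp] at hb
  by_cases hgt : ∃ a, 1 < f (γ a)
  · obtain ⟨a, ha⟩ := hgt
    exact AddCircle.nontrivial_setOf_eq_of_lt_of_lt (f.continuous_of_finiteDimensional.comp hc)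
      (b := b) ha (by simp only [Function.comp_apply]; linarith)
  · push Not at hgt
    have h := nontrivial_inter_setOf_eq_of_mem_convexHull (by rintro _ ⟨x, rfl⟩; exact hgt x)
      (hhull hp) hpγ hfp
    rw [← image_preimage_eq_range_inter] at h
    exact nontrivial_of_image γ _ h

/-- Any closed rectifiable curve `γ : ℝ/L → ℝ³`, parameterized with
constant unit speed, whose convex hull contains the unit sphere, has horizon `H(γ) ≥ 8π`. -/
theorem horizon_ge_eight_pi
    (L : ℝ) (γ : AddCircle L → E3) (hγ : IsInspectionCurve L γ) :
    ENNReal.ofReal (8 * π) ≤ horizonCurve L γ := by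
  obtain ⟨hL, hc, hlip, -, hhull⟩ := hγ
  have hnull : μH[2] (range γ) = 0 := by
    rw [← QuotientAddGroup.mk_surjective.range_comp γ]
    exact_mod_cast hlip.hausdorffMeasure_range_eq_zero (d := 2) one_lt_two
  have hcount : ∀ᵐ p ∂μH[2].restrict (Metric.sphere (0 : E3) 1),
      2 ≤ ({t ∈ Ico (0 : ℝ) L | inner ℝ (liftCurve L γ t) p = (1 : ℝ)}.encard : ℝ≥0∞) := by
    filter_upwards [ae_restrict_mem Metric.isClosed_sphere.measurableSet,
      ae_restrict_of_ae (measure_eq_zero_iff_ae_notMem.1 hnull)] with p hp hpγ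
    exact_mod_cast two_le_encard_setOf_inner_eq_one hL hc hhull hp hpγ
  calc ENNReal.ofReal (8 * π) = 2 * ENNReal.ofReal (4 * π) := by
        rw [← ENNReal.ofReal_ofNat 2, ← ENNReal.ofReal_mul zero_le_two]; ring_nf
    _ ≤ 2 * μH[2] (Metric.sphere (0 : E3) 1) := by gcongr; exact four_pi_le_hausdorffMeasure_sphere
    _ = ∫⁻ _ in Metric.sphere (0 : E3) 1, 2 ∂μH[2] := (setLIntegral_const _ 2).symm
    _ ≤ horizonCurve L γ := lintegral_mono_ae hcount
end
end
end
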